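/- arXiv:1304.5013 — 3 statements merged into one kernel-verified Lean document; each statement's English description precedes it below -/
import Mathlib

section
/- The map T sending a continuous curve γ:[0,t_γ]→ℂ to the pair (its equivalence class modulo increasing reparametrization, its occupation measure ν_γ) is Lipschitz continuous with Lipschitz constant at most 2, where the space of curves carries the metric d(γ₁,γ₂)=|t_{γ₁}−t_{γ₂}|+sup_{0≤s≤t_{γ₁}∨t_{γ₂}}|γ₁(s)−γ₂(s)| (curves extended constantly past their endpoint), equivalence classes carry the metric ρ(γ₁,γ₂)=inf_φ sup_s |γ₁(s)−γ₂(φ(s))| over increasing homeomorphisms φ:[0,t_{γ₁}]→[0,t_{γ₂}], and measures carry the Lévy–Prokhorov metric; the product space carries the sum metric. -/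
/-!
Let `M` be the largest distance between `γ₁(s)` and `γ₂(s)` over common times, so that
`d(γ₁, γ₂) = |t₁ - t₂| + M`. A time at which `γ₁` visits `A` is a time at which `γ₂` visits
`A^M`, unless it exceeds `t₂`; hence the Lévy–Prokhorov distance is at most `|t₁ - t₂| + M`.
For `ρ`, reparametrize by the identity up to a time `c` just below `min t₁ t₂` and linearly
afterwards: since the curves are continuous and frozen after their lifetimes, the curve with the
shorter lifetime barely moves after `c`, so `ρ ≤ M + ε` for every `ε > 0`.
-/

open MeasureTheory Metric Set Filter

noncomputable section

/-- A continuous curve in `ℂ` with finite lifetime `T`, extended constantly past its endpoint. -/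
structure Curve where
  T : ℝ
  hT : 0 ≤ T
  f : ℝ → ℂ
  cont : Continuous f
  frozen : ∀ s, T ≤ s → f s = f T

/-- The metric `d(γ₁,γ₂) = |t_{γ₁} - t_{γ₂}| + sup_{0 ≤ s ≤ t_{γ₁} ∨ t_{γ₂}} |γ₁(s) - γ₂(s)|`. -/
def dCurve (γ₁ γ₂ : Curve) : ℝ :=
  |γ₁.T - γ₂.T| + ⨆ s : Icc (0 : ℝ) (max γ₁.T γ₂.T), dist (γ₁.f s) (γ₂.f s)

/-- The occupation measure `ν_γ(A) = ∫₀^{t_γ} 1{γ(s) ∈ A} ds`. -/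
def occ (γ : Curve) : Measure ℂ :=
  Measure.map γ.f (volume.restrict (Icc 0 γ.T))

/-- `φ` is an increasing homeomorphism from `[0,a]` onto `[0,b]`. -/
def IsRepar (a b : ℝ) (φ : ℝ → ℝ) : Prop :=
  ContinuousOn φ (Icc 0 a) ∧ StrictMonoOn φ (Icc 0 a) ∧ φ 0 = 0 ∧ φ a = b ∧
    φ '' Icc 0 a = Icc 0 b

/-- `ρ(γ₁,γ₂) = inf_φ sup_{0 ≤ s ≤ t_{γ₁}} |γ₁(s) - γ₂(φ(s))|`, infimum over increasing
homeomorphisms `φ : [0,t_{γ₁}] → [0,t_{γ₂}]`. -/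
def rho (γ₁ γ₂ : Curve) : ℝ :=
  sInf {r : ℝ | 0 ≤ r ∧ ∃ φ, IsRepar γ₁.T γ₂.T φ ∧
    ∀ s ∈ Icc (0 : ℝ) γ₁.T, dist (γ₁.f s) (γ₂.f (φ s)) ≤ r}

/-- The Lévy–Prokhorov distance between finite Borel measures on `ℂ`; here `A^ε` is the set of
points within distance `ε` of `A`, i.e. `Metric.cthickening ε A`. -/
def dLP (μ ν : Measure ℂ) : ℝ :=
  sInf {ε : ℝ | 0 < ε ∧ ∀ A : Set ℂ, MeasurableSet A →
    μ A ≤ ν (cthickening ε A) + ENNReal.ofReal ε ∧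
    ν A ≤ μ (cthickening ε A) + ENNReal.ofReal ε}

/-- The right-continuous inverse `Θ⁻¹(t) = inf {s ∈ [0,a] : Θ(s) > t}` (with value `a` when the
set is empty). -/
def rcInv (Θ : ℝ → ℝ) (a t : ℝ) : ℝ :=
  sInf ({s | s ∈ Icc 0 a ∧ t < Θ s} ∪ {a})

/-- `Θ_η(s) = μ(η[0,s])`. -/
def Theta (η : ℝ → ℂ) (μ : Measure ℂ) (s : ℝ) : ℝ :=
  (μ (η '' Icc 0 s)).toReal

namespace Curve

lemma exists_dist_endpoint_lt (γ : Curve) {ε : ℝ} (hε : 0 < ε) :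
    ∃ δ > 0, ∀ x, γ.T - δ < x → dist (γ.f x) (γ.f γ.T) < ε := by
  obtain ⟨δ, hδ, hnear⟩ := Metric.continuousAt_iff.mp γ.cont.continuousAt ε hε
  refine ⟨δ, hδ, fun x hx => ?_⟩
  rcases le_total x γ.T with hxT | hTx
  · exact hnear (by rw [Real.dist_eq, abs_of_nonpos (by linarith)]; linarith)
  · rwa [γ.frozen x hTx, dist_self]

lemma exists_tail_dist_le (γ : Curve) (hT : 0 < γ.T) {ε : ℝ} (hε : 0 < ε) :
    ∃ c, 0 ≤ c ∧ c < γ.T ∧ ∀ x ≥ c, ∀ y ≥ c, dist (γ.f x) (γ.f y) ≤ ε := by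
  obtain ⟨δ, hδ, hnear⟩ := γ.exists_dist_endpoint_lt (half_pos hε)
  refine ⟨max 0 (γ.T - δ / 2), le_max_left _ _, max_lt hT (by linarith), fun x hx y hy => ?_⟩
  have hx' : γ.T - δ < x := by linarith [le_max_right 0 (γ.T - δ / 2)]
  have hy' : γ.T - δ < y := by linarith [le_max_right 0 (γ.T - δ / 2)]
  calc dist (γ.f x) (γ.f y) ≤ dist (γ.f x) (γ.f γ.T) + dist (γ.f y) (γ.f γ.T) :=
        dist_triangle_right _ _ _
    _ ≤ ε / 2 + ε / 2 := add_le_add (hnear x hx').le (hnear y hy').le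
    _ = ε := add_halves ε

lemma occ_apply (γ : Curve) {A : Set ℂ} (hA : MeasurableSet A) :
    occ γ A = volume (γ.f ⁻¹' A ∩ Icc 0 γ.T) := by
  rw [occ, Measure.map_apply γ.cont.measurable hA,
    Measure.restrict_apply (γ.cont.measurable hA)]

lemma bddAbove_range_dist (γ₁ γ₂ : Curve) (a : ℝ) :
    BddAbove (range fun s : Icc 0 a => dist (γ₁.f s) (γ₂.f s)) := by
  rw [← image_eq_range (fun s => dist (γ₁.f s) (γ₂.f s))]
  exact (isCompact_Icc.image (γ₁.cont.dist γ₂.cont)).bddAbove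

end Curve

lemma isRepar_of_strictMono {a b : ℝ} {φ : ℝ → ℝ} (ha : 0 ≤ a) (hcont : Continuous φ)
    (hmono : StrictMono φ) (h0 : φ 0 = 0) (hab : φ a = b) : IsRepar a b φ := by
  refine ⟨hcont.continuousOn, hmono.strictMonoOn _, h0, hab, ?_⟩
  rw [hcont.continuousOn.image_Icc_of_monotoneOn ha (hmono.monotone.monotoneOn _), h0, hab]

lemma IsRepar.eq_zero_iff {a b : ℝ} {φ : ℝ → ℝ} (h : IsRepar a b φ) (ha : 0 ≤ a) :
    a = 0 ↔ b = 0 := by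
  obtain ⟨-, hmono, h0, hab, -⟩ := h
  constructor
  · rintro rfl
    rw [← hab, h0]
  · intro hb
    by_contra ha0
    have := hmono (left_mem_Icc.mpr ha) (right_mem_Icc.mpr ha) (lt_of_le_of_ne ha (Ne.symm ha0))
    rw [h0, hab, hb] at this
    exact lt_irrefl 0 this

def stretchAfter (c a b : ℝ) (s : ℝ) : ℝ :=
  if s ≤ c then s else c + (s - c) * ((b - c) / (a - c))

lemma isRepar_stretchAfter {a b c : ℝ} (h0c : 0 ≤ c) (hca : c < a) (hcb : c < b) :
    IsRepar a b (stretchAfter c a b) := by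
  have hk : 0 < (b - c) / (a - c) := div_pos (by linarith) (by linarith)
  refine isRepar_of_strictMono (by linarith) ?_ ?_ (if_pos h0c) ?_
  · refine Continuous.if_le continuous_id (by fun_prop) continuous_id continuous_const ?_
    intro x hx
    simp [hx]
  · intro x y hxy
    unfold stretchAfter
    split_ifs with hx hy hy
    · exact hxy
    · nlinarith [mul_pos (by linarith : (0 : ℝ) < y - c) hk]
    · linarith
    · nlinarith [mul_lt_mul_of_pos_right (sub_lt_sub_right hxy c) hk]
  · rw [stretchAfter, if_neg (not_le.mpr hca)]
    field_simp [(sub_pos.mpr hca).ne']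
    ring

section rho

variable {γ₁ γ₂ : Curve}

lemma rho_le_of_isRepar {r : ℝ} {φ : ℝ → ℝ} (hr : 0 ≤ r) (hφ : IsRepar γ₁.T γ₂.T φ)
    (h : ∀ s ∈ Icc (0 : ℝ) γ₁.T, dist (γ₁.f s) (γ₂.f (φ s)) ≤ r) : rho γ₁ γ₂ ≤ r :=
  csInf_le ⟨0, fun _ hx => hx.1⟩ ⟨hr, φ, hφ, h⟩

/-- `sInf ∅ = 0` in `ℝ`, so `rho` vanishes when the lifetimes admit no reparametrization. -/
lemma rho_eq_zero_of_ne_of_eq_zero (hne : γ₁.T ≠ γ₂.T) (h0 : γ₁.T = 0 ∨ γ₂.T = 0) :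
    rho γ₁ γ₂ = 0 := by
  unfold rho
  convert Real.sInf_empty
  refine eq_empty_of_forall_notMem fun _ ⟨_, φ, hφ, _⟩ => hne ?_
  have hiff := hφ.eq_zero_iff γ₁.hT
  rcases h0 with h0 | h0
  · rw [h0, hiff.mp h0]
  · rw [h0, hiff.mpr h0]

/-- Reparametrizing by `stretchAfter c`, the curves are compared at equal times on `[0, c]`
and at arbitrary times of the final segments. -/
lemma rho_le_of_dist_le_of_tail {c r : ℝ} (h0c : 0 ≤ c) (hc₁ : c < γ₁.T) (hc₂ : c < γ₂.T)
    (hhead : ∀ s ∈ Icc 0 c, dist (γ₁.f s) (γ₂.f s) ≤ r)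
    (htail : ∀ s ∈ Icc c γ₁.T, ∀ u ∈ Icc c γ₂.T, dist (γ₁.f s) (γ₂.f u) ≤ r) :
    rho γ₁ γ₂ ≤ r := by
  have hφ := isRepar_stretchAfter h0c hc₁ hc₂
  refine rho_le_of_isRepar (dist_nonneg.trans (hhead 0 ⟨le_rfl, h0c⟩)) hφ fun s hs => ?_
  rcases le_or_gt s c with hsc | hcs
  · rw [stretchAfter, if_pos hsc]
    exact hhead s ⟨hs.1, hsc⟩
  · obtain ⟨-, hmono, -, -, himage⟩ := hφ
    have hcφ : c ≤ stretchAfter c γ₁.T γ₂.T s := by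
      simpa [stretchAfter] using hmono.monotoneOn ⟨h0c, hc₁.le⟩ hs hcs.le
    have hφT : stretchAfter c γ₁.T γ₂.T s ∈ Icc 0 γ₂.T := himage ▸ mem_image_of_mem _ hs
    exact htail s ⟨hcs.le, hs.2⟩ _ ⟨hcφ, hφT.2⟩

lemma rho_le_add_of_forall_dist_le {M ε : ℝ} (h₁ : 0 < γ₁.T) (h₂ : 0 < γ₂.T) (hε : 0 < ε)
    (hM : ∀ s ∈ Icc (0 : ℝ) (max γ₁.T γ₂.T), dist (γ₁.f s) (γ₂.f s) ≤ M) :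
    rho γ₁ γ₂ ≤ M + ε := by
  have hhead {c} (hc : c ≤ max γ₁.T γ₂.T) (s) (hs : s ∈ Icc 0 c) :
      dist (γ₁.f s) (γ₂.f s) ≤ M + ε :=
    (hM s ⟨hs.1, hs.2.trans hc⟩).trans (le_add_of_nonneg_right hε.le)
  rcases le_total γ₁.T γ₂.T with h₁₂ | h₂₁
  · obtain ⟨c, h0c, hc, hosc⟩ := γ₁.exists_tail_dist_le h₁ hε
    refine rho_le_of_dist_le_of_tail h0c hc (hc.trans_le h₁₂)
      (hhead (hc.le.trans (le_max_left _ _))) fun s hs u hu => ?_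
    calc dist (γ₁.f s) (γ₂.f u) ≤ dist (γ₁.f s) (γ₁.f u) + dist (γ₁.f u) (γ₂.f u) :=
          dist_triangle _ _ _
      _ ≤ ε + M := add_le_add (hosc s hs.1 u hu.1)
          (hM u ⟨h0c.trans hu.1, le_max_of_le_right hu.2⟩)
      _ = M + ε := add_comm _ _
  · obtain ⟨c, h0c, hc, hosc⟩ := γ₂.exists_tail_dist_le h₂ hε
    refine rho_le_of_dist_le_of_tail h0c (hc.trans_le h₂₁) hc
      (hhead (hc.le.trans (le_max_right _ _))) fun s hs u hu => ?_
    calc dist (γ₁.f s) (γ₂.f u) ≤ dist (γ₁.f s) (γ₂.f s) + dist (γ₂.f s) (γ₂.f u) :=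
          dist_triangle _ _ _
      _ ≤ M + ε := add_le_add (hM s ⟨h0c.trans hs.1, le_max_of_le_left hs.2⟩)
          (hosc s hs.1 u hu.1)

lemma rho_le_of_forall_dist_le {M : ℝ}
    (hM : ∀ s ∈ Icc (0 : ℝ) (max γ₁.T γ₂.T), dist (γ₁.f s) (γ₂.f s) ≤ M) : rho γ₁ γ₂ ≤ M := by
  have hM0 : 0 ≤ M := dist_nonneg.trans (hM 0 ⟨le_rfl, le_max_of_le_left γ₁.hT⟩)
  rcases eq_or_ne γ₁.T γ₂.T with heq | hne
  · exact rho_le_of_isRepar hM0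
      (isRepar_of_strictMono γ₁.hT continuous_id strictMono_id rfl heq)
      fun s hs => hM s ⟨hs.1, le_max_of_le_left hs.2⟩
  by_cases h0 : γ₁.T = 0 ∨ γ₂.T = 0
  · exact (rho_eq_zero_of_ne_of_eq_zero hne h0).trans_le hM0
  obtain ⟨h₁, h₂⟩ := not_or.mp h0
  exact le_of_forall_pos_le_add fun ε hε => rho_le_add_of_forall_dist_le
    (γ₁.hT.lt_of_ne' h₁) (γ₂.hT.lt_of_ne' h₂) hε hM

end rho

section dLP

lemma dLP_le_of_forall_gt {μ ν : Measure ℂ} {r : ℝ} (hr : 0 ≤ r)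
    (hμν : ∀ ε > r, ∀ A, MeasurableSet A → μ A ≤ ν (cthickening ε A) + ENNReal.ofReal ε)
    (hνμ : ∀ ε > r, ∀ A, MeasurableSet A → ν A ≤ μ (cthickening ε A) + ENNReal.ofReal ε) :
    dLP μ ν ≤ r :=
  le_of_forall_gt_imp_ge_of_dense fun ε hε =>
    csInf_le ⟨0, fun _ hx => hx.1.le⟩
      ⟨hr.trans_lt hε, fun A hA => ⟨hμν ε hε A hA, hνμ ε hε A hA⟩⟩

/-- A time `s ≤ T₁` at which `γ₁` visits `A` is either a time `≤ T₂` at which `γ₂` visits `A^ε`,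
or lies in `[T₂, T₁]`, of length at most `ε`. -/
lemma occ_le_occ_cthickening_add {γ₁ γ₂ : Curve} {ε : ℝ}
    (hd : ∀ s ∈ Icc (0 : ℝ) γ₁.T, dist (γ₁.f s) (γ₂.f s) ≤ ε) (hT : γ₁.T - γ₂.T ≤ ε)
    {A : Set ℂ} (hA : MeasurableSet A) :
    occ γ₁ A ≤ occ γ₂ (cthickening ε A) + ENNReal.ofReal ε := by
  have hcover : γ₁.f ⁻¹' A ∩ Icc 0 γ₁.T ⊆
      (γ₂.f ⁻¹' cthickening ε A ∩ Icc 0 γ₂.T) ∪ Icc γ₂.T γ₁.T := by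
    rintro s ⟨hsA, hs⟩
    rcases le_or_gt s γ₂.T with hs₂ | hs₂
    · exact Or.inl ⟨mem_cthickening_of_dist_le _ _ _ _ hsA (dist_comm (γ₁.f s) _ ▸ hd s hs),
        hs.1, hs₂⟩
    · exact Or.inr ⟨hs₂.le, hs.2⟩
  calc occ γ₁ A ≤ volume (γ₂.f ⁻¹' cthickening ε A ∩ Icc 0 γ₂.T) + volume (Icc γ₂.T γ₁.T) := by
        rw [γ₁.occ_apply hA]
        exact (measure_mono hcover).trans (measure_union_le _ _)
    _ ≤ occ γ₂ (cthickening ε A) + ENNReal.ofReal ε := by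
        rw [γ₂.occ_apply isClosed_cthickening.measurableSet, Real.volume_Icc]
        exact add_le_add le_rfl (ENNReal.ofReal_le_ofReal hT)

lemma dLP_occ_le_of_forall_dist_le {γ₁ γ₂ : Curve} {M : ℝ}
    (hM : ∀ s ∈ Icc (0 : ℝ) (max γ₁.T γ₂.T), dist (γ₁.f s) (γ₂.f s) ≤ M) :
    dLP (occ γ₁) (occ γ₂) ≤ |γ₁.T - γ₂.T| + M := by
  have hM0 : 0 ≤ M := dist_nonneg.trans (hM 0 ⟨le_rfl, le_max_of_le_left γ₁.hT⟩)
  refine dLP_le_of_forall_gt (by positivity) (fun ε hε A hA => ?_) fun ε hε A hA => ?_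
  · refine occ_le_occ_cthickening_add (fun s hs => ?_) ?_ hA
    · linarith [hM s ⟨hs.1, le_max_of_le_left hs.2⟩, abs_nonneg (γ₁.T - γ₂.T)]
    · linarith [le_abs_self (γ₁.T - γ₂.T)]
  · refine occ_le_occ_cthickening_add (fun s hs => ?_) ?_ hA
    · linarith [dist_comm (γ₁.f s) (γ₂.f s) ▸ hM s ⟨hs.1, le_max_of_le_right hs.2⟩,
        abs_nonneg (γ₁.T - γ₂.T)]
    · linarith [neg_abs_le (γ₁.T - γ₂.T)]

end dLP

/-- the map `T : γ ↦ (γ̃, ν_γ)` is Lipschitz with constant at most `2`, from the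
metric `d` on curves to the sum metric `ρ + d_LP` on the product space. -/
theorem statement0 (γ₁ γ₂ : Curve) :
    rho γ₁ γ₂ + dLP (occ γ₁) (occ γ₂) ≤ 2 * dCurve γ₁ γ₂ := by
  set M := ⨆ s : Icc (0 : ℝ) (max γ₁.T γ₂.T), dist (γ₁.f s) (γ₂.f s)
  have hM : ∀ s ∈ Icc (0 : ℝ) (max γ₁.T γ₂.T), dist (γ₁.f s) (γ₂.f s) ≤ M :=
    fun s hs => le_ciSup (Curve.bddAbove_range_dist γ₁ γ₂ _) ⟨s, hs⟩
  have hρ := rho_le_of_forall_dist_le hM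
  have hLP := dLP_occ_le_of_forall_dist_le hM
  rw [dCurve]
  linarith [abs_nonneg (γ₁.T - γ₂.T)]
end
end

section
/- If γ₁,γ₂ are continuous curves with d(γ₁,γ₂)=δ (with d the supremum-plus-lifetime metric, curves extended constantly past their endpoints), then for every Borel set A, ν_{γ₁}(A) ≤ δ + ν_{γ₂}(A^δ), where ν_γ denotes the occupation measure of γ and A^δ the δ-neighborhood of A. Consequently the Lévy–Prokhorov distance between ν_{γ₁} and ν_{γ₂} is at most δ. -/
open MeasureTheory Metric Set Filter

noncomputable section

lemma occ_le_aux (γ₁ γ₂ : Curve) (ε : ℝ)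
    (hd : ∀ s ∈ Icc (0:ℝ) (max γ₁.T γ₂.T), dist (γ₁.f s) (γ₂.f s) ≤ ε)
    (hT : γ₁.T - γ₂.T ≤ ε)
    (A : Set ℂ) (hA : MeasurableSet A) :
    occ γ₁ A ≤ ENNReal.ofReal ε + occ γ₂ (cthickening ε A) := by
  have hε0 : 0 ≤ ε :=
    le_trans dist_nonneg (hd 0 ⟨le_rfl, le_trans γ₁.hT (le_max_left _ _)⟩)
  have hA' : MeasurableSet (cthickening ε A) := isClosed_cthickening.measurableSet
  rw [occ, occ, Measure.map_apply γ₁.cont.measurable hA,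
    Measure.map_apply γ₂.cont.measurable hA',
    Measure.restrict_apply (γ₁.cont.measurable hA),
    Measure.restrict_apply (γ₂.cont.measurable hA')]
  set m := min γ₁.T γ₂.T with hm
  have hsub : γ₁.f ⁻¹' A ∩ Icc 0 γ₁.T ⊆
      (γ₂.f ⁻¹' (cthickening ε A) ∩ Icc 0 γ₂.T) ∪ Ioc m γ₁.T := by
    intro s hs
    rcases le_or_gt s m with h | h
    · left
      refine ⟨?_, hs.2.1, le_trans h (min_le_right _ _)⟩
      exact mem_cthickening_of_dist_le _ _ _ _ hs.1
        (by rw [dist_comm]; exact hd s ⟨hs.2.1, hs.2.2.trans (le_max_left _ _)⟩)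
    · right; exact ⟨h, hs.2.2⟩
  have htail : γ₁.T - m ≤ ε := by
    rcases le_total γ₁.T γ₂.T with h | h
    · simp [hm, min_eq_left h, hε0]
    · simpa [hm, min_eq_right h] using hT
  calc volume (γ₁.f ⁻¹' A ∩ Icc 0 γ₁.T)
      ≤ volume ((γ₂.f ⁻¹' (cthickening ε A) ∩ Icc 0 γ₂.T) ∪ Ioc m γ₁.T) :=
        measure_mono hsub
    _ ≤ volume (γ₂.f ⁻¹' (cthickening ε A) ∩ Icc 0 γ₂.T) + volume (Ioc m γ₁.T) :=
        measure_union_le _ _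
    _ ≤ volume (γ₂.f ⁻¹' (cthickening ε A) ∩ Icc 0 γ₂.T) + ENNReal.ofReal ε := by
        gcongr
        rw [Real.volume_Ioc]
        exact ENNReal.ofReal_le_ofReal htail
    _ = ENNReal.ofReal ε + volume (γ₂.f ⁻¹' (cthickening ε A) ∩ Icc 0 γ₂.T) :=
        add_comm _ _

/-- if `d(γ₁,γ₂) = δ` then `ν_{γ₁}(A) ≤ δ + ν_{γ₂}(A^δ)` for every Borel `A`,
and consequently `d_LP(ν_{γ₁}, ν_{γ₂}) ≤ δ`. -/
theorem statement1 (γ₁ γ₂ : Curve) (δ : ℝ) (hδ : dCurve γ₁ γ₂ = δ) :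
    (∀ A : Set ℂ, MeasurableSet A →
      occ γ₁ A ≤ ENNReal.ofReal δ + occ γ₂ (cthickening δ A)) ∧
    dLP (occ γ₁) (occ γ₂) ≤ δ := by
  have hbdd : BddAbove (Set.range fun s : Icc (0:ℝ) (max γ₁.T γ₂.T) =>
      dist (γ₁.f ↑s) (γ₂.f ↑s)) := by
    have he : (fun s : Icc (0:ℝ) (max γ₁.T γ₂.T) => dist (γ₁.f ↑s) (γ₂.f ↑s)) =
        (fun t => dist (γ₁.f t) (γ₂.f t)) ∘ Subtype.val := rfl
    rw [he, Set.range_comp, Subtype.range_coe]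
    exact isCompact_Icc.bddAbove_image (γ₁.cont.dist γ₂.cont).continuousOn
  have hmax0 : (0:ℝ) ∈ Icc (0:ℝ) (max γ₁.T γ₂.T) :=
    ⟨le_rfl, le_trans γ₁.hT (le_max_left _ _)⟩
  have hδ' : |γ₁.T - γ₂.T| + (⨆ s : Icc (0:ℝ) (max γ₁.T γ₂.T),
      dist (γ₁.f ↑s) (γ₂.f ↑s)) = δ := hδ
  have hsup0 : 0 ≤ ⨆ s : Icc (0:ℝ) (max γ₁.T γ₂.T), dist (γ₁.f ↑s) (γ₂.f ↑s) :=
    le_trans dist_nonneg (le_ciSup hbdd ⟨0, hmax0⟩)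
  have hTd : |γ₁.T - γ₂.T| ≤ δ := by linarith
  have hδ0 : 0 ≤ δ := by
    have := abs_nonneg (γ₁.T - γ₂.T); linarith
  have hsup : ∀ s ∈ Icc (0:ℝ) (max γ₁.T γ₂.T), dist (γ₁.f s) (γ₂.f s) ≤ δ := by
    intro s hs
    have h1 : dist (γ₁.f s) (γ₂.f s) ≤ ⨆ s : Icc (0:ℝ) (max γ₁.T γ₂.T),
        dist (γ₁.f ↑s) (γ₂.f ↑s) := le_ciSup hbdd ⟨s, hs⟩
    have := abs_nonneg (γ₁.T - γ₂.T); linarith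
  have hsup' : ∀ s ∈ Icc (0:ℝ) (max γ₂.T γ₁.T), dist (γ₂.f s) (γ₁.f s) ≤ δ := by
    intro s hs
    rw [dist_comm]
    exact hsup s (by rwa [max_comm] at hs)
  have hT1 : γ₁.T - γ₂.T ≤ δ := le_trans (le_abs_self _) hTd
  have hT2 : γ₂.T - γ₁.T ≤ δ := by
    rw [abs_sub_comm] at hTd; exact le_trans (le_abs_self _) hTd
  constructor
  · intro A hA
    exact occ_le_aux γ₁ γ₂ δ hsup hT1 A hA
  · apply le_of_forall_gt_imp_ge_of_dense
    intro ε hε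
    apply csInf_le ⟨0, fun x hx => hx.1.le⟩
    refine ⟨lt_of_le_of_lt hδ0 hε, fun A hA => ⟨?_, ?_⟩⟩
    · have := occ_le_aux γ₁ γ₂ ε (fun s hs => (hsup s hs).trans hε.le)
        (by linarith) A hA
      rwa [add_comm] at this
    · have := occ_le_aux γ₂ γ₁ ε (fun s hs => (hsup' s hs).trans hε.le)
        (by linarith) A hA
      rwa [add_comm] at this
end
end

section
/- Let γ be a continuous simple curve with lifetime t_γ, let η be any reparametrization of γ (i.e., η=γ∘φ for an increasing homeomorphism φ:[0,t_η]→[0,t_γ]), and define Θ_η(t)=ν_γ(η[0,t]) where ν_γ is the occupation measure of γ. Then Θ_η is continuous and non-decreasing, and γ(t)=η(Θ_η^{-1}(t)) for all t∈[0,t_γ], where Θ_η^{-1} denotes the right-continuous inverse. In particular γ is recoverable from the pair (equivalence class of γ, ν_γ). -/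
open MeasureTheory Metric Set Filter

noncomputable section

/-- for a simple curve `γ` and any reparametrization `η = γ ∘ φ` of it, the
function `Θ_η(t) = ν_γ(η[0,t])` is continuous and non-decreasing, and `γ(t) = η(Θ_η⁻¹(t))`
for `t ∈ [0,t_γ]`, where `Θ_η⁻¹` is the right-continuous inverse. Thus `γ` is recoverable
from its equivalence class together with its occupation measure. -/
theorem statement3 (γ η : Curve) (hsimple : InjOn γ.f (Icc 0 γ.T))
    (φ : ℝ → ℝ) (hφ : IsRepar η.T γ.T φ)
    (hη : ∀ s ∈ Icc (0 : ℝ) η.T, η.f s = γ.f (φ s)) :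
    ContinuousOn (fun t => ((occ γ) (η.f '' Icc 0 t)).toReal) (Icc 0 η.T) ∧
    MonotoneOn (fun t => ((occ γ) (η.f '' Icc 0 t)).toReal) (Icc 0 η.T) ∧
    ∀ t ∈ Icc (0 : ℝ) γ.T,
      γ.f t = η.f (rcInv (fun s => ((occ γ) (η.f '' Icc 0 s)).toReal) η.T t) := by
  obtain ⟨hcont, hmono, h0, hT, himg⟩ := hφ
  have hsub : ∀ t ∈ Icc (0:ℝ) η.T, Icc (0:ℝ) t ⊆ Icc 0 η.T :=
    fun t ht => Icc_subset_Icc le_rfl ht.2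
  have himage : ∀ t ∈ Icc (0:ℝ) η.T, η.f '' Icc 0 t = γ.f '' Icc 0 (φ t) := by
    intro t ht
    have h1 : η.f '' Icc 0 t = γ.f '' (φ '' Icc 0 t) := by
      rw [← image_comp]
      exact image_congr fun s hs => hη s (hsub t ht hs)
    have h2 : φ '' Icc 0 t = Icc 0 (φ t) := by
      apply Subset.antisymm
      · rintro _ ⟨s, hs, rfl⟩
        refine ⟨?_, hmono.monotoneOn (hsub t ht hs) ht hs.2⟩
        have := hmono.monotoneOn (left_mem_Icc.2 η.hT) (hsub t ht hs) hs.1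
        rwa [h0] at this
      · have := intermediate_value_Icc ht.1 (hcont.mono (hsub t ht))
        rwa [h0] at this
    rw [h1, h2]
  have hmemT : ∀ t ∈ Icc (0:ℝ) η.T, φ t ∈ Icc (0:ℝ) γ.T := by
    intro t ht; rw [← himg]; exact mem_image_of_mem φ ht
  have hocc : ∀ u ∈ Icc (0:ℝ) γ.T, occ γ (γ.f '' Icc 0 u) = ENNReal.ofReal u := by
    intro u hu
    have hmeas : MeasurableSet (γ.f '' Icc 0 u) :=
      (isCompact_Icc.image γ.cont).isClosed.measurableSet
    rw [occ, Measure.map_apply γ.cont.measurable hmeas,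
        Measure.restrict_apply (γ.cont.measurable hmeas)]
    have hpre : γ.f ⁻¹' (γ.f '' Icc 0 u) ∩ Icc 0 γ.T = Icc 0 u := by
      apply Subset.antisymm
      · rintro s ⟨⟨s', hs', heq⟩, hsT⟩
        have := hsimple (Icc_subset_Icc le_rfl hu.2 hs') hsT heq
        rwa [← this]
      · intro s hs
        exact ⟨mem_image_of_mem _ hs, Icc_subset_Icc le_rfl hu.2 hs⟩
    rw [hpre, Real.volume_Icc, sub_zero]
  have hTheta : ∀ t ∈ Icc (0:ℝ) η.T, ((occ γ) (η.f '' Icc 0 t)).toReal = φ t := by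
    intro t ht
    rw [himage t ht, hocc _ (hmemT t ht), ENNReal.toReal_ofReal (hmemT t ht).1]
  refine ⟨ContinuousOn.congr hcont hTheta, ?_, ?_⟩
  · intro a ha b hb hab
    simp only
    rw [hTheta a ha, hTheta b hb]
    exact hmono.monotoneOn ha hb hab
  · intro t ht
    obtain ⟨u, hu, hut⟩ : ∃ u ∈ Icc (0:ℝ) η.T, φ u = t := by
      have : t ∈ φ '' Icc 0 η.T := himg ▸ ht
      obtain ⟨u, hu, h⟩ := this; exact ⟨u, hu, h⟩
    have hset : {s | s ∈ Icc 0 η.T ∧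
        t < (fun s => ((occ γ) (η.f '' Icc 0 s)).toReal) s} = Ioc u η.T := by
      ext s
      simp only [mem_setOf_eq, mem_Ioc]
      constructor
      · rintro ⟨hs, hts⟩
        rw [hTheta s hs] at hts
        exact ⟨(hmono.lt_iff_lt hu hs).1 (hut ▸ hts), hs.2⟩
      · rintro ⟨hus, hsT⟩
        have hs : s ∈ Icc 0 η.T := ⟨le_trans hu.1 hus.le, hsT⟩
        refine ⟨hs, ?_⟩
        rw [hTheta s hs, ← hut]
        exact (hmono.lt_iff_lt hu hs).2 hus
    rw [rcInv, hset]
    rcases eq_or_lt_of_le hu.2 with heq | hlt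
    · rw [heq, Ioc_self, empty_union, csInf_singleton,
        hη η.T (right_mem_Icc.2 η.hT), ← heq, hut]
    · have hun : Ioc u η.T ∪ {η.T} = Ioc u η.T :=
        union_eq_self_of_subset_right (singleton_subset_iff.2 ⟨hlt, le_rfl⟩)
      rw [hun, csInf_Ioc hlt, hη u hu, hut]
end
end
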